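/- Let r ∈ ℝ^m have pairwise distinct entries with minimum gap γ = min_{i ≠ j} |rᵢ − rⱼ| > 0, and let r̃ ∈ ℝ^m satisfy |rᵢ − r̃ᵢ| < γ/2 for all i. Then for all indices i, j: rᵢ < rⱼ if and only if r̃ᵢ < r̃ⱼ; consequently the rank of every entry is preserved, so any rank-based dependence score (such as Spearman's ρ or Kendall's τ) computed from r̃ equals that computed from r. In particular, if each of k modified training points moves every residual by at most 8/(n λ^{3/2}) (so |rᵢ − r̃ᵢ| ≤ 8k/(n λ^{3/2})), the score is unchanged whenever 16k/(n λ^{3/2}) < γ, i.e., the distance to instability of the rank-based score exceeds ⌊n γ λ^{3/2}/16⌋. -/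
import Mathlib


open Finset

/-- Rank of entry `i` in vector `r`: the number of indices `j` with `r j ≤ r i`. -/
noncomputable def rankOf {m : ℕ} (r : Fin m → ℝ) (i : Fin m) : ℕ :=
  (Finset.univ.filter fun j => r j ≤ r i).card

/-- If every entry of the residual vector moves by less than half the minimum gap `γ`, the
order (hence the rank) of every entry is preserved, so any rank-based dependence score is
unchanged; in particular modifying `k` training points, each moving every residual by at
most `8/(n λ^{3/2})`, leaves such a score unchanged whenever `16 k/(n λ^{3/2}) < γ`. -/
theorem rank_based_score_stability {m : ℕ} (hm : 2 ≤ m)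
    (r : Fin m → ℝ) (hr : Function.Injective r)
    (hne : (Finset.univ (α := Fin m)).offDiag.Nonempty) (γ : ℝ)
    (hγ : γ = (Finset.univ (α := Fin m)).offDiag.inf' hne fun p => |r p.1 - r p.2|)
    (hγpos : 0 < γ) :
    (∀ tr : Fin m → ℝ, (∀ i, |r i - tr i| < γ / 2) →
      (∀ i j, r i < r j ↔ tr i < tr j) ∧
      (∀ i, rankOf r i = rankOf tr i) ∧
      (∀ s : (Fin m → ℝ) → ℝ,
        (∀ u v : Fin m → ℝ, (∀ i, rankOf u i = rankOf v i) → s u = s v) → s tr = s r)) ∧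
    (∀ (n k : ℕ) (lam : ℝ) (tr : Fin m → ℝ),
      (∀ i, |r i - tr i| ≤ 8 * (k : ℝ) / ((n : ℝ) * lam ^ ((3 : ℝ) / 2))) →
      16 * (k : ℝ) / ((n : ℝ) * lam ^ ((3 : ℝ) / 2)) < γ →
      ∀ s : (Fin m → ℝ) → ℝ,
        (∀ u v : Fin m → ℝ, (∀ i, rankOf u i = rankOf v i) → s u = s v) → s tr = s r) := by
  have key : ∀ tr : Fin m → ℝ, (∀ i, |r i - tr i| < γ / 2) →
      (∀ i j, r i < r j ↔ tr i < tr j) ∧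
      (∀ i, rankOf r i = rankOf tr i) ∧
      (∀ s : (Fin m → ℝ) → ℝ,
        (∀ u v : Fin m → ℝ, (∀ i, rankOf u i = rankOf v i) → s u = s v) → s tr = s r) := by
    intro tr htr
    have gap : ∀ i j : Fin m, i ≠ j → γ ≤ |r i - r j| := by
      intro i j hij
      rw [hγ]
      exact Finset.inf'_le _ (show (i, j) ∈ Finset.univ.offDiag from Finset.mem_offDiag.mpr ⟨Finset.mem_univ i, Finset.mem_univ j, hij⟩)
    have hlt : ∀ i j, r i < r j → tr i < tr j := by
      intro i j hij
      have hne' : i ≠ j := fun h => by simp [h] at hij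
      have h1 := gap i j hne'
      have h2 : |r i - r j| = r j - r i := by
        rw [abs_sub_comm]; exact abs_of_pos (by linarith)
      rw [h2] at h1
      linarith [(abs_lt.mp (htr i)).1, (abs_lt.mp (htr i)).2,
        (abs_lt.mp (htr j)).1, (abs_lt.mp (htr j)).2]
    have hiff : ∀ i j, r i < r j ↔ tr i < tr j := by
      intro i j
      constructor
      · exact hlt i j
      · intro h
        by_contra hno
        push_neg at hno
        rcases lt_or_eq_of_le hno with h2 | h2
        · exact absurd h (not_lt.mpr (le_of_lt (hlt j i h2)))
        · have : i = j := hr h2.symm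
          subst this; exact lt_irrefl _ h
    have hle : ∀ i j : Fin m, (r j ≤ r i ↔ tr j ≤ tr i) := by
      intro i j
      rw [← not_lt, ← not_lt, not_iff_not]
      exact hiff i j
    have hrank : ∀ i, rankOf r i = rankOf tr i := by
      intro i
      unfold rankOf
      congr 1
      apply Finset.filter_congr
      intro j _
      simp [hle i j]
    exact ⟨hiff, hrank, fun s hs => hs tr r (fun i => (hrank i).symm)⟩
  refine ⟨key, ?_⟩
  intro n k lam tr htr hlt s hs
  have : ∀ i, |r i - tr i| < γ / 2 := by
    intro i
    have h1 := htr i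
    have : 8 * (k : ℝ) / ((n : ℝ) * lam ^ ((3 : ℝ) / 2)) < γ / 2 := by
      have : 16 * (k : ℝ) / ((n : ℝ) * lam ^ ((3 : ℝ) / 2))
          = 2 * (8 * (k : ℝ) / ((n : ℝ) * lam ^ ((3 : ℝ) / 2))) := by ring
      linarith [hlt, this ▸ hlt]
    linarith
  exact (key tr this).2.2 s hs
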